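/- Let X_0 be a real-valued random variable such that 0 < G(r) < ∞ for every r ≥ 0. Then Var[U_r(X_0)] / E[(U_r(X_0))²] → 1 as r → ∞, and equivalently Var[U_r(X_0)] / (2G(r)) → 1 as r → ∞. -/

import Mathlib

open MeasureTheory ProbabilityTheory Filter Asymptotics
open scoped ENNReal Topology NNReal

noncomputable section

/-- The shrinking operator `U_r : ℝ → ℝ` (for `r ≥ 0`):
`U_r(x) = x - r` if `x > r`, `0` if `|x| ≤ r`, and `x + r` if `x < -r`. -/
def shrink (r x : ℝ) : ℝ := if r < x then x - r else if x < -r then x + r else 0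

variable {Ω : Type*}

/-- `G(r) := ∫₀^∞ t · P(|X| > t + r) dt`. -/
def Gfun [MeasurableSpace Ω] (P : Measure Ω) (X : Ω → ℝ) (r : ℝ) : ℝ≥0∞ :=
  ∫⁻ t in Set.Ioi (0 : ℝ), ENNReal.ofReal t * P {ω | t + r < |X ω|}

/-- Strict stationarity of a two-sided sequence of random variables: for all `j, l ∈ ℤ`
and `m ≥ 0`, the random vectors `(X_j, …, X_{j+m})` and `(X_l, …, X_{l+m})` have the
same distribution. -/
def StrictlyStationary [MeasurableSpace Ω] (P : Measure Ω) (X : ℤ → Ω → ℝ) : Prop :=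
  ∀ (j l : ℤ) (m : ℕ),
    Measure.map (fun ω => fun i : Fin (m + 1) => X (j + i) ω) P =
    Measure.map (fun ω => fun i : Fin (m + 1) => X (l + i) ω) P

/-- The correlation coefficient of two real random variables. -/
def corr [MeasurableSpace Ω] (P : Measure Ω) (f g : Ω → ℝ) : ℝ :=
  (∫ ω, (f ω - ∫ x, f x ∂P) * (g ω - ∫ x, g x ∂P) ∂P) /
    (Real.sqrt (∫ ω, (f ω - ∫ x, f x ∂P) ^ 2 ∂P) *
      Real.sqrt (∫ ω, (g ω - ∫ x, g x ∂P) ^ 2 ∂P))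

/-- The maximal correlation coefficient `ρ(𝒜, ℬ)`: the supremum of `|Corr(f,g)|` over
square-integrable `f` measurable w.r.t. `𝒜` and `g` measurable w.r.t. `ℬ`. -/
def maxCorr [mΩ : MeasurableSpace Ω] (P : Measure Ω) (A B : MeasurableSpace Ω) : ℝ :=
  sSup { c | ∃ f g : Ω → ℝ, Measurable[A] f ∧ Measurable[B] g ∧
    MemLp (m0 := mΩ) f 2 P ∧ MemLp (m0 := mΩ) g 2 P ∧ c = |@corr Ω mΩ P f g| }

/-- The strong mixing coefficient `α(𝒜, ℬ)`. -/
def alphaMix [MeasurableSpace Ω] (P : Measure Ω) (A B : MeasurableSpace Ω) : ℝ :=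
  sSup { c | ∃ s t : Set Ω, MeasurableSet[A] s ∧ MeasurableSet[B] t ∧
    c = |(P (s ∩ t)).toReal - (P s).toReal * (P t).toReal| }

/-- The σ-field generated by the random variables `X k`, `k ∈ S`. -/
def genFrom [MeasurableSpace Ω] (X : ℤ → Ω → ℝ) (S : Set ℤ) : MeasurableSpace Ω :=
  ⨆ k ∈ S, MeasurableSpace.comap (X k) inferInstance

/-- `ρ(n) = ρ(σ(X_k, k ≤ 0), σ(X_k, k ≥ n))`. -/
def rhoCoef [MeasurableSpace Ω] (P : Measure Ω) (X : ℤ → Ω → ℝ) (n : ℕ) : ℝ :=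
  maxCorr P (genFrom X {k | k ≤ 0}) (genFrom X {k | (n : ℤ) ≤ k})

/-- `α(n) = α(σ(X_k, k ≤ 0), σ(X_k, k ≥ n))`. -/
def alphaCoef [MeasurableSpace Ω] (P : Measure Ω) (X : ℤ → Ω → ℝ) (n : ℕ) : ℝ :=
  alphaMix P (genFrom X {k | k ≤ 0}) (genFrom X {k | (n : ℤ) ≤ k})

/-- `ρ*(n)`: the supremum of `ρ(σ(X_k, k ∈ S), σ(X_k, k ∈ T))` over all pairs of nonempty
disjoint `S, T ⊆ ℤ` with `dist(S,T) ≥ n`. -/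
def rhoStarCoef [MeasurableSpace Ω] (P : Measure Ω) (X : ℤ → Ω → ℝ) (n : ℕ) : ℝ :=
  sSup { c | ∃ S T : Set ℤ, S.Nonempty ∧ T.Nonempty ∧ Disjoint S T ∧
    (∀ s ∈ S, ∀ t ∈ T, (n : ℤ) ≤ |s - t|) ∧
    c = maxCorr P (genFrom X S) (genFrom X T) }

/-- `Y_{k,r} := U_r(X_k) - E[U_r(X_0)]`. -/
def Ymix [MeasurableSpace Ω] (P : Measure Ω) (X : ℤ → Ω → ℝ) (k : ℤ) (r : ℝ) (ω : Ω) : ℝ :=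
  shrink r (X k ω) - ∫ ω', shrink r (X 0 ω') ∂P

/-! For `r ≥ 0` one has `U_r(x)² = ((|x| - r)⁺)²`, so the layer-cake formula gives
`E[U_r(X₀)²] = 2 G(r)`. Since `U_r(X₀)` vanishes off `{|X₀| > r}`, Cauchy–Schwarz against the
indicator of that event gives `(E U_r(X₀))² ≤ E[U_r(X₀)²] · P(|X₀| > r)`. Hence
`Var[U_r(X₀)] / E[U_r(X₀)²]` lies between `1 - P(|X₀| > r)` and `1`, and the tail probability
tends to `0`. -/

@[fun_prop]
lemma measurable_shrink (r : ℝ) : Measurable (shrink r) :=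
  Measurable.ite (measurableSet_lt measurable_const measurable_id) (measurable_id.sub_const r)
    (Measurable.ite (measurableSet_lt measurable_id measurable_const) (measurable_id.add_const r)
      measurable_const)

lemma abs_shrink {r : ℝ} (hr : 0 ≤ r) (x : ℝ) : |shrink r x| = max (|x| - r) 0 := by
  unfold shrink
  split_ifs with h₁ h₂
  · rw [abs_of_pos (sub_pos.2 h₁), abs_of_pos (hr.trans_lt h₁), max_eq_left (by linarith)]
  · rw [abs_of_neg (by linarith), abs_of_neg (by linarith), max_eq_left (by linarith)]
    ring
  · rw [abs_zero, max_eq_right (by rw [sub_nonpos, abs_le]; constructor <;> linarith)]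

lemma shrink_eq_zero {r x : ℝ} (h : |x| ≤ r) : shrink r x = 0 := by
  rw [abs_le] at h
  rw [shrink, if_neg (not_lt.2 h.2), if_neg (not_lt.2 h.1)]

section

variable [MeasurableSpace Ω]

lemma lintegral_shrink_sq (μ : Measure Ω) {X : Ω → ℝ} (hX : Measurable X) {r : ℝ}
    (hr : 0 ≤ r) : ∫⁻ ω, ENNReal.ofReal (shrink r (X ω) ^ 2) ∂μ = 2 * Gfun μ X r := by
  have layercake := lintegral_rpow_eq_lintegral_meas_lt_mul μ
    (f := fun ω => max (|X ω| - r) 0) (ae_of_all μ fun _ => le_max_right _ _)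
    (by fun_prop) two_pos
  simp only [Real.rpow_two, ← abs_shrink hr, sq_abs, ENNReal.ofReal_ofNat] at layercake
  rw [layercake, Gfun]
  refine congrArg (2 * ·) (setLIntegral_congr_fun measurableSet_Ioi fun t (ht : 0 < t) => ?_)
  have hlevel : {ω | t < |shrink r (X ω)|} = {ω | t + r < |X ω|} := by
    ext ω
    simp only [Set.mem_ofPred_eq, abs_shrink hr, lt_max_iff, ht.not_gt, or_false]
    constructor <;> intro h <;> linarith
  norm_num [hlevel, mul_comm]

lemma integral_shrink_sq (μ : Measure Ω) {X : Ω → ℝ} (hX : Measurable X) {r : ℝ}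
    (hr : 0 ≤ r) : ∫ ω, shrink r (X ω) ^ 2 ∂μ = 2 * (Gfun μ X r).toReal := by
  rw [integral_eq_lintegral_of_nonneg_ae (ae_of_all μ fun _ => sq_nonneg _)
    (by fun_prop : Measurable fun ω => shrink r (X ω) ^ 2).aestronglyMeasurable,
    lintegral_shrink_sq μ hX hr, ENNReal.toReal_mul, ENNReal.toReal_ofNat]

lemma memLp_shrink (μ : Measure Ω) {X : Ω → ℝ} (hX : Measurable X) {r : ℝ} (hr : 0 ≤ r)
    (hG : Gfun μ X r < ∞) : MemLp (fun ω => shrink r (X ω)) 2 μ := by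
  have hmeas := (by fun_prop : Measurable fun ω => shrink r (X ω)).aestronglyMeasurable (μ := μ)
  refine (memLp_two_iff_integrable_sq hmeas).2 ⟨hmeas.pow 2, ?_⟩
  rw [hasFiniteIntegral_iff_ofReal (ae_of_all μ fun _ => sq_nonneg _),
    lintegral_shrink_sq μ hX hr]
  exact ENNReal.mul_lt_top ENNReal.ofNat_lt_top hG

lemma sq_integral_le_integral_sq_mul_measureReal {μ : Measure Ω} [IsFiniteMeasure μ]
    {g : Ω → ℝ} {s : Set Ω} (hs : MeasurableSet s) (hg : MemLp g 2 μ)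
    (hgs : ∀ ω ∉ s, g ω = 0) :
    (∫ ω, g ω ∂μ) ^ 2 ≤ (∫ ω, g ω ^ 2 ∂μ) * μ.real s := by
  have holder := integral_mul_le_Lp_mul_Lq_of_nonneg Real.HolderConjugate.two_two
    (ae_of_all μ fun ω => abs_nonneg (g ω))
    (ae_of_all μ (s.indicator_nonneg fun _ _ => zero_le_one))
    (by simpa using hg.norm) (by simpa using (memLp_const (1 : ℝ)).indicator hs)
  have hsupp : ∀ ω, |g ω| * s.indicator (fun _ => 1) ω = |g ω| := fun ω => by
    by_cases hω : ω ∈ s <;> simp [hω, hgs]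
  have hind : ∀ ω, s.indicator (fun _ => (1 : ℝ)) ω ^ 2 = s.indicator (fun _ => 1) ω :=
    fun ω => by by_cases hω : ω ∈ s <;> simp [hω]
  simp only [hsupp, Real.rpow_two, hind, sq_abs, integral_indicator_const _ hs, smul_eq_mul,
    mul_one, ← Real.sqrt_eq_rpow] at holder
  calc (∫ ω, g ω ∂μ) ^ 2 ≤ (∫ ω, |g ω| ∂μ) ^ 2 := by
        rw [← sq_abs]
        exact pow_le_pow_left₀ (abs_nonneg _) abs_integral_le_integral_abs 2
    _ ≤ (√(∫ ω, g ω ^ 2 ∂μ) * √(μ.real s)) ^ 2 :=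
        pow_le_pow_left₀ (integral_nonneg fun _ => abs_nonneg _) holder 2
    _ = (∫ ω, g ω ^ 2 ∂μ) * μ.real s := by
        rw [mul_pow, Real.sq_sqrt (integral_nonneg fun _ => sq_nonneg _),
          Real.sq_sqrt measureReal_nonneg]

lemma tendsto_measureReal_setOf_lt_atTop {μ : Measure Ω} [IsFiniteMeasure μ] {f : Ω → ℝ}
    (hf : Measurable f) :
    Tendsto (fun r : ℝ => μ.real {ω | r < f ω}) atTop (𝓝 0) := by
  have hempty : (⋂ r : ℝ, {ω | r < f ω}) = ∅ :=
    Set.iInter_eq_empty_iff.2 fun ω => ⟨f ω, lt_irrefl (f ω)⟩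
  have hlim := tendsto_measure_iInter_atTop (μ := μ)
    (fun r => (measurableSet_lt measurable_const hf).nullMeasurableSet)
    (fun _ _ hab ω (hω : _ < f ω) => hab.trans_lt hω) ⟨0, measure_ne_top μ _⟩
  rw [hempty, measure_empty] at hlim
  exact (ENNReal.tendsto_toReal ENNReal.zero_ne_top).comp hlim

lemma variance_div_integral_sq_mem_Icc {μ : Measure Ω} [IsProbabilityMeasure μ] {Y : Ω → ℝ}
    {s : Set Ω} (hs : MeasurableSet s) (hY : MemLp Y 2 μ) (hYs : ∀ ω ∉ s, Y ω = 0)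
    (hpos : 0 < ∫ ω, Y ω ^ 2 ∂μ) :
    Var[Y; μ] / ∫ ω, Y ω ^ 2 ∂μ ∈ Set.Icc (1 - μ.real s) 1 := by
  have hvar : Var[Y; μ] = ∫ ω, Y ω ^ 2 ∂μ - (∫ ω, Y ω ∂μ) ^ 2 := variance_eq_sub hY
  have hCS := sq_integral_le_integral_sq_mul_measureReal hs hY hYs
  rw [hvar, Set.mem_Icc, le_div_iff₀ hpos, div_le_one hpos]
  constructor <;> nlinarith [sq_nonneg (∫ ω, Y ω ∂μ)]

end

/-- **Lemma 4.1 (eq. (4.5)).** `Var[U_r(X_0)] / E[(U_r(X_0))²] → 1` and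
`Var[U_r(X_0)] / (2G(r)) → 1` as `r → ∞`. -/
theorem variance_ratio_tendsto_one
    [MeasurableSpace Ω] (P : Measure Ω) [IsProbabilityMeasure P]
    (X₀ : Ω → ℝ) (hmeas : Measurable X₀)
    (hG : ∀ r : ℝ, 0 ≤ r → 0 < Gfun P X₀ r ∧ Gfun P X₀ r < ∞) :
    Tendsto (fun r : ℝ =>
        variance (fun ω => shrink r (X₀ ω)) P / ∫ ω, shrink r (X₀ ω) ^ 2 ∂P)
      atTop (𝓝 1) ∧
    Tendsto (fun r : ℝ =>
        variance (fun ω => shrink r (X₀ ω)) P / (2 * (Gfun P X₀ r).toReal))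
      atTop (𝓝 1) := by
  have hmoment : ∀ r, 0 ≤ r → ∫ ω, shrink r (X₀ ω) ^ 2 ∂P = 2 * (Gfun P X₀ r).toReal :=
    fun r hr => integral_shrink_sq P hmeas hr
  have hbounds : ∀ᶠ r in atTop, variance (fun ω => shrink r (X₀ ω)) P /
      ∫ ω, shrink r (X₀ ω) ^ 2 ∂P ∈ Set.Icc (1 - P.real {ω | r < |X₀ ω|}) 1 := by
    filter_upwards [eventually_ge_atTop 0] with r hr
    have hpos : 0 < ∫ ω, shrink r (X₀ ω) ^ 2 ∂P := by
      rw [hmoment r hr]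
      exact mul_pos two_pos (ENNReal.toReal_pos (hG r hr).1.ne' (hG r hr).2.ne)
    exact variance_div_integral_sq_mem_Icc (measurableSet_lt measurable_const hmeas.abs)
      (memLp_shrink P hmeas hr (hG r hr).2) (fun ω hω => shrink_eq_zero (not_lt.1 hω)) hpos
  have hlower : Tendsto (fun r => 1 - P.real {ω | r < |X₀ ω|}) atTop (𝓝 1) := by
    simpa using tendsto_const_nhds.sub (tendsto_measureReal_setOf_lt_atTop hmeas.abs)
  have hfirst := tendsto_of_tendsto_of_tendsto_of_le_of_le' hlower tendsto_const_nhds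
    (hbounds.mono fun _ h => h.1) (hbounds.mono fun _ h => h.2)
  refine ⟨hfirst, hfirst.congr' ?_⟩
  filter_upwards [eventually_ge_atTop 0] with r hr
  rw [hmoment r hr]
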